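/- arXiv:1709.03263 — 2 statements merged into one kernel-verified Lean document; each statement's English description precedes it below -/
import Mathlib

section
/- The 4×4 determinant det(r̃₅(V₂⁽⁰⁾), ∂_{σ₃}F(σ₃₀,σ₂₀;V₁⁽⁰⁾), ∂_{σ₂}F(σ₃₀,σ₂₀;V₁⁽⁰⁾), ∇_V F(σ₃₀,σ₂₀;V₁⁽⁰⁾)·r̃₁(V₁⁽⁰⁾)) equals κ₁(V₁⁽⁰⁾)κ₅(V₂⁽⁰⁾)(ρ₁⁽⁰⁾)²(u₁⁽⁰⁾)² e^{σ₂₀+σ₃₀}(λ₅(V₂⁽⁰⁾)e^{2σ₂₀+σ₃₀} + λ₅(V₁⁽⁰⁾)), and is strictly positive when κ₁(V₁⁽⁰⁾), κ₅(V₂⁽⁰⁾), λ₅(V₁⁽⁰⁾), λ₅(V₂⁽⁰⁾) > 0. -/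
theorem Matrix.det_fin_four_of_two_sparse_columns {R : Type*} [CommRing R]
    (a b c d e f g h i j : R) :
    !![a, 0, b, c; d, 0, 0, e; f, 0, 0, g; h, i, 0, j].det = -(i * b * (d * g - e * f)) := by
  simp [Matrix.det_succ_column _ 1, Fin.sum_univ_succ, Fin.succAbove]
  ring

/-- The columns are `r̃₅(V₂⁽⁰⁾)`, `∂σ₃F`, `∂σ₂F`, `∇_V F · r̃₁(V₁⁽⁰⁾)` at the background states,
with `u₂⁽⁰⁾ = u₁⁽⁰⁾e^{σ₂₀}`, `ρ₂⁽⁰⁾ = ρ₁⁽⁰⁾e^{σ₃₀}` and `λ₁(V₁⁽⁰⁾) = -λ₅(V₁⁽⁰⁾)`. -/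
theorem stmt5 (κ1 κ5 ρ1 u1 c1 c2 σ20 σ30 lam51 lam52 : ℝ)
    (hρ1 : 0 < ρ1) (hu1 : 0 < u1) :
    let ρ2 := ρ1 * Real.exp σ30
    let u2 := u1 * Real.exp σ20
    let M : Matrix (Fin 4) (Fin 4) ℝ := Matrix.of
      ![![-(κ5 * lam52), 0, u1 * Real.exp σ20, -(κ1 * lam51 * Real.exp σ20)],
        ![κ5, 0, 0, κ1 * Real.exp σ20],
        ![κ5 * lam52 * ρ2 * u2, 0, 0, -(κ1 * lam51 * ρ1 * u1)],
        ![κ5 * lam52 * ρ2 * u2 / c2 ^ 2, ρ1 * Real.exp σ30, 0,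
          -(κ1 * lam51 * ρ1 * u1 * Real.exp σ30 / c1 ^ 2)]]
    M.det = κ1 * κ5 * ρ1 ^ 2 * u1 ^ 2 * Real.exp (σ20 + σ30) *
        (lam52 * Real.exp (2 * σ20 + σ30) + lam51) ∧
      (0 < κ1 → 0 < κ5 → 0 < lam51 → 0 < lam52 → 0 < M.det) := by
  intro ρ2 u2 M
  have hdet : M.det = κ1 * κ5 * ρ1 ^ 2 * u1 ^ 2 * Real.exp (σ20 + σ30) *
      (lam52 * Real.exp (2 * σ20 + σ30) + lam51) := by
    rw [Matrix.det_fin_four_of_two_sparse_columns,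
      show 2 * σ20 + σ30 = σ20 + (σ20 + σ30) by ring]
    simp only [Real.exp_add]
    ring
  refine ⟨hdet, fun hκ1 hκ5 hlam51 hlam52 => ?_⟩
  rw [hdet]
  positivity
end

section
/- Weighted Z-decay estimate: for constants l, h > 0 and M, K_z > 0 with K_z ≥ M(ε̃ + 2)², define F_c(k) = F(k) + K_z Σ_{j=k+1}^∞ e^{−ljh} h ‖Z₀‖_∞. If F(k) ≤ F(k−1) + M e^{−lkh} h ‖Z₀‖_∞ (F(k−1) + 2)² and F(k−1) ≤ ε̃, then F_c(k) ≤ F_c(k−1). -/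
lemma aux12 (l h Z0 : ℝ) (hl : 0 < l) (hh : 0 < h) (A : ℝ) :
    ∑' j : ℕ, Real.exp (-(l * (A + j) * h)) * h * Z0
      = Real.exp (-(l * A * h)) * (1 - Real.exp (-(l * h)))⁻¹ * (h * Z0) := by
  have hr : Real.exp (-(l * h)) < 1 := by
    rw [Real.exp_lt_one_iff]; nlinarith
  have hkey : ∀ j : ℕ, Real.exp (-(l * (A + j) * h)) * h * Z0
      = Real.exp (-(l * A * h)) * Real.exp (-(l * h)) ^ j * (h * Z0) := by
    intro j
    rw [← Real.exp_nat_mul, ← Real.exp_add]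
    ring_nf
  simp_rw [hkey]
  rw [tsum_mul_right, tsum_mul_left,
    tsum_geometric_of_lt_one (by positivity) hr]

/-- Monotonicity of the weighted Glimm functional F_c(k) = F(k) + K_z Σ_{j>k} e^{-ljh} h ‖Z₀‖. -/
theorem stmt12 (F : ℕ → ℝ) (M Kz l h Z0 ε : ℝ) (k : ℕ)
    (hl : 0 < l) (hh : 0 < h) (hM : 0 < M) (hZ0 : 0 ≤ Z0)
    (hKz : M * (ε + 2) ^ 2 ≤ Kz) (hk : 1 ≤ k)
    (hFnn : 0 ≤ F (k - 1)) (hFe : F (k - 1) ≤ ε)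
    (hrec : F k ≤ F (k - 1) +
      M * Real.exp (-(l * k * h)) * h * Z0 * (F (k - 1) + 2) ^ 2) :
    F k + Kz * ∑' j : ℕ, Real.exp (-(l * ((k : ℝ) + 1 + j) * h)) * h * Z0 ≤
      F (k - 1) + Kz * ∑' j : ℕ, Real.exp (-(l * ((k : ℝ) + j) * h)) * h * Z0 := by
  rw [aux12 l h Z0 hl hh ((k : ℝ) + 1), aux12 l h Z0 hl hh (k : ℝ)]
  set r := Real.exp (-(l * h)) with hrdef
  have hr0 : 0 < r := Real.exp_pos _
  have hr1 : r < 1 := by rw [hrdef, Real.exp_lt_one_iff]; nlinarith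
  have hS : (1 - r)⁻¹ * (1 - r) = 1 := inv_mul_cancel₀ (by linarith)
  set Ek := Real.exp (-(l * k * h)) with hEk
  have hEk0 : 0 < Ek := Real.exp_pos _
  have hEk1 : Real.exp (-(l * ((k : ℝ) + 1) * h)) = Ek * r := by
    rw [hEk, hrdef, ← Real.exp_add]; ring_nf
  rw [hEk1]
  have hS0 : 0 < (1 - r)⁻¹ := inv_pos.mpr (by linarith)
  -- step bound : F k - F (k-1) ≤ Kz * Ek * h * Z0
  have hε : 0 ≤ ε := le_trans hFnn hFe
  have hKz0 : 0 < Kz := lt_of_lt_of_le (mul_pos hM (by nlinarith)) hKz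
  have hM2 : M * (F (k - 1) + 2) ^ 2 ≤ Kz :=
    le_trans (mul_le_mul_of_nonneg_left (by nlinarith) hM.le) hKz
  have hstep : F k ≤ F (k - 1) + Kz * Ek * (h * Z0) := by
    have h1 : M * Ek * h * Z0 * (F (k - 1) + 2) ^ 2 ≤ Kz * Ek * (h * Z0) := by
      nlinarith [mul_pos hEk0 hh, mul_nonneg (mul_pos hEk0 hh).le hZ0]
    linarith
  nlinarith [mul_nonneg (mul_nonneg hKz0.le (mul_pos hEk0 hS0).le)
      (mul_nonneg hh.le hZ0), mul_pos hEk0 hS0, mul_nonneg hh.le hZ0,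
    mul_le_mul_of_nonneg_left hS.le (mul_nonneg (mul_nonneg hKz0.le hEk0.le) (mul_nonneg hh.le hZ0))]
end
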